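/- Let M be a smooth manifold and let Ric : T_x M → ℝ be a quadratic form on each tangent space given by Ric(v) = λ(x) F(v)² where F : TM → [0,∞) is positively 1-homogeneous and λ : M → ℝ. Fix x with λ(x) ≠ 0. Then v ↦ F(v)² restricted to T_x M is a quadratic form, hence F restricted to T_x M is the norm induced by a (semi-definite) symmetric bilinear form; if F is moreover a Minkowski norm, F_x comes from an inner product. -/

import Mathlib

namespace QuadraticMap

variable {K V : Type*} [Field K] [Invertible (2 : K)] [AddCommGroup V] [Module K V]

theorem sq_eq_associated_inv_smul_of_apply_eq_mul_sq (Q : QuadraticForm K V) (f : V → K)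
    {c : K} (hc : c ≠ 0) (hQ : ∀ v, Q v = c * f v ^ 2) (v : V) :
    f v ^ 2 = associated (R := K) (c⁻¹ • Q) v v := by
  rw [associated_eq_self_apply, smul_apply, hQ, smul_eq_mul, inv_mul_cancel_left₀ hc]

end QuadraticMap

open QuadraticMap in
theorem stmt_7_general {E H : Type*} [NormedAddCommGroup E] [NormedSpace ℝ E]
    [TopologicalSpace H] (I : ModelWithCorners ℝ E H)
    {M : Type*} [TopologicalSpace M] [ChartedSpace H M]
    (Ric : ∀ x : M, QuadraticForm ℝ (TangentSpace I x))
    (F : ∀ x : M, TangentSpace I x → ℝ)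
    (lam : M → ℝ)
    (hRic : ∀ (x : M) (v : TangentSpace I x), Ric x v = lam x * (F x v) ^ 2)
    (x : M) (hx : lam x ≠ 0) :
    ∃ B : LinearMap.BilinForm ℝ (TangentSpace I x), B.IsSymm ∧
      (∀ v : TangentSpace I x, (F x v) ^ 2 = B v v) ∧
      ((∀ v : TangentSpace I x, v ≠ 0 → 0 < F x v) →
        ∀ v : TangentSpace I x, v ≠ 0 → 0 < B v v) := by
  have hF := sq_eq_associated_inv_smul_of_apply_eq_mul_sq (Ric x) (F x) hx (hRic x)
  refine ⟨associated ((lam x)⁻¹ • Ric x), ⟨associated_isSymm ℝ _⟩, hF, fun hpos v hv => ?_⟩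
  rw [← hF]
  exact pow_pos (hpos v hv) 2

/-- If on a smooth manifold the Ricci curvature is a quadratic form on each tangent
space with `Ric(v) = λ(x) F(v)²` for a positively 1-homogeneous `F`, then at each
point `x` with `λ(x) ≠ 0` the function `v ↦ F(v)²` is a quadratic form, i.e. induced
by a symmetric bilinear form; if moreover `F` is positive away from `0` (a Minkowski
norm), this bilinear form is positive definite, i.e. an inner product. -/
theorem stmt_7 {E H : Type*} [NormedAddCommGroup E] [NormedSpace ℝ E]
    [TopologicalSpace H] (I : ModelWithCorners ℝ E H)
    {M : Type*} [TopologicalSpace M] [ChartedSpace H M]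
    (Ric : ∀ x : M, QuadraticForm ℝ (TangentSpace I x))
    (F : ∀ x : M, TangentSpace I x → ℝ)
    (hFnn : ∀ x v, 0 ≤ F x v)
    (hFhom : ∀ (x : M) (t : ℝ), 0 < t → ∀ v : TangentSpace I x,
      F x (t • v) = t * F x v)
    (lam : M → ℝ)
    (hRic : ∀ (x : M) (v : TangentSpace I x), Ric x v = lam x * (F x v) ^ 2)
    (x : M) (hx : lam x ≠ 0) :
    ∃ B : LinearMap.BilinForm ℝ (TangentSpace I x), B.IsSymm ∧
      (∀ v : TangentSpace I x, (F x v) ^ 2 = B v v) ∧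
      ((∀ v : TangentSpace I x, v ≠ 0 → 0 < F x v) →
        ∀ v : TangentSpace I x, v ≠ 0 → 0 < B v v) :=
  stmt_7_general I Ric F lam hRic x hx
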